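/- arXiv:math/0302015 — 8 statements merged into one kernel-verified Lean document; each statement's English description precedes it below -/
import Mathlib

section
/- For all n ≥ 0, the cubes of the Fibonacci numbers satisfy the linear recurrence F_{n+4}^3 = 3·F_{n+3}^3 + 6·F_{n+2}^3 − 3·F_{n+1}^3 − F_n^3, corresponding to the denominator (1+x−x^2)(1−4x−x^2) of the generating function of F_n^3. -/
theorem fib_cube_recurrence (n : ℕ) :
    (Nat.fib (n + 4) : ℤ) ^ 3 =
      3 * (Nat.fib (n + 3) : ℤ) ^ 3 + 6 * (Nat.fib (n + 2) : ℤ) ^ 3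
        - 3 * (Nat.fib (n + 1) : ℤ) ^ 3 - (Nat.fib n : ℤ) ^ 3 := by
  have h2 : Nat.fib (n + 2) = Nat.fib n + Nat.fib (n + 1) := Nat.fib_add_two
  have h3 : Nat.fib (n + 3) = Nat.fib (n + 1) + Nat.fib (n + 2) := Nat.fib_add_two
  have h4 : Nat.fib (n + 4) = Nat.fib (n + 2) + Nat.fib (n + 3) := Nat.fib_add_two
  rw [h4, h3, h2]
  push_cast
  ring
end

section
/- For all n ≥ 0, the fourth powers of the Fibonacci numbers satisfy the linear recurrence F_{n+5}^4 = 5·F_{n+4}^4 + 15·F_{n+3}^4 − 15·F_{n+2}^4 − 5·F_{n+1}^4 + F_n^4, corresponding to the denominator (1−x)(1+3x+x^2)(1−7x+x^2) of the generating function of F_n^4. -/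
theorem fib_fourth_recurrence (n : ℕ) :
    (Nat.fib (n + 5) : ℤ) ^ 4 =
      5 * (Nat.fib (n + 4) : ℤ) ^ 4 + 15 * (Nat.fib (n + 3) : ℤ) ^ 4
        - 15 * (Nat.fib (n + 2) : ℤ) ^ 4 - 5 * (Nat.fib (n + 1) : ℤ) ^ 4
        + (Nat.fib n : ℤ) ^ 4 := by
  have h2 := Nat.fib_add_two (n := n)
  have h3 := Nat.fib_add_two (n := n + 1)
  have h4 := Nat.fib_add_two (n := n + 2)
  have h5 := Nat.fib_add_two (n := n + 3)
  simp only [show n+1+2 = n+3 from rfl, show n+2+2 = n+4 from rfl,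
    show n+3+2 = n+5 from rfl, show n+1+1 = n+2 from rfl,
    show n+2+1 = n+3 from rfl, show n+3+1 = n+4 from rfl] at h3 h4 h5
  rw [h5, h4, h3, h2]
  push_cast
  ring
end

section
/- The formal power series G(x) = ∑_{n≥0} F_n^3 x^n over ℚ satisfies (1+x−x^2)(1−4x−x^2) · G(x) = x(1−2x−x^2). -/
/-!
The cubes `F_n ^ 3` are linear combinations of the geometric sequences `φ^i ψ^j` with `i + j = 3`, where
`φ ψ = -1`, so they satisfy the linear recurrence of order four whose reversed characteristic
polynomial is `(1 + x - x^2)(1 - 4x - x^2) = 1 - 3x - 6x^2 + 3x^3 + x^4`. Multiplying the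
generating function by this polynomial kills every coefficient of degree at least four, and the
initial values `0, 1, 1, 8` give the remaining cubic.
-/

open PowerSeries

theorem PowerSeries.mk_eq_X_mul_mk_succ_add_C {R : Type*} [Semiring R] (a : ℕ → R) :
    mk a = X * mk (fun n => a (n + 1)) + C (a 0) := by
  simpa using eq_X_mul_shift_add_const (mk a)

theorem Nat.fib_cube_add_four (n : ℕ) :
    fib (n + 4) ^ 3 + 3 * fib (n + 1) ^ 3 + fib n ^ 3
      = 3 * fib (n + 3) ^ 3 + 6 * fib (n + 2) ^ 3 := by
  simp only [fib_add_two]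
  ring

theorem fib_cube_genfun :
    (1 + X - X ^ 2) * (1 - 4 * X - X ^ 2) * PowerSeries.mk (fun n => (Nat.fib n : ℚ) ^ 3)
      = X * (1 - 2 * X - X ^ 2) := by
  set G : ℕ → ℚ⟦X⟧ := fun k => mk fun n => (Nat.fib (n + k) : ℚ) ^ 3 with hG
  have shift (k : ℕ) : G k = X * G (k + 1) + C ((Nat.fib k : ℚ) ^ 3) := by
    simpa only [hG, add_assoc, add_comm 1 k, zero_add] using
      mk_eq_X_mul_mk_succ_add_C fun n => (Nat.fib (n + k) : ℚ) ^ 3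
  have recurrence : G 4 + 3 * G 1 + G 0 = 3 * G 3 + 6 * G 2 := by
    ext n
    simpa [hG, ← map_ofNat C, coeff_C_mul] using congr(($(Nat.fib_cube_add_four n) : ℚ))
  have h0 := shift 0
  have h1 := shift 1
  have h2 := shift 2
  have h3 := shift 3
  norm_num [Nat.fib_add_two, map_ofNat] at h0 h1 h2 h3
  linear_combination (1 - 3 * X - 6 * X ^ 2 + 3 * X ^ 3) * h0 + (X - 3 * X ^ 2 - 6 * X ^ 3) * h1
    + (X ^ 2 - 3 * X ^ 3) * h2 + X ^ 3 * h3 + X ^ 4 * recurrence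
end

section
/- The formal power series G(x) = ∑_{n≥0} P_n^2 x^n over ℚ satisfies (1+x)(1−6x+x^2) · G(x) = x(1−x). -/
open PowerSeries

def pell : ℕ → ℚ
  | 0 => 0
  | 1 => 1
  | n + 2 => 2 * pell (n + 1) + pell n

/-- The squares of a second-order linear recurrence satisfy a third-order one; here its
characteristic polynomial is `(t + 1) (t² - 6t + 1)`, whose roots are the pairwise products of
the roots `1 ± √2` of `t² - 2t - 1`. -/
theorem pell_sq_add_three (n : ℕ) :
    pell (n + 3) ^ 2 = 5 * pell (n + 2) ^ 2 + 5 * pell (n + 1) ^ 2 - pell n ^ 2 := by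
  simp only [pell]
  ring

theorem PowerSeries.mul_mk_of_recurrence_three {R : Type*} [CommRing R] (a : ℕ → R)
    (c₀ c₁ c₂ : R) (h : ∀ n, a (n + 3) = c₂ * a (n + 2) + c₁ * a (n + 1) + c₀ * a n) :
    (1 - C c₂ * X - C c₁ * X ^ 2 - C c₀ * X ^ 3) * mk a
      = C (a 0) + C (a 1 - c₂ * a 0) * X + C (a 2 - c₂ * a 1 - c₁ * a 0) * X ^ 2 := by
  ext (_ | _ | _ | n) <;> simp [sub_mul, mul_assoc, mul_comm X, coeff_X_pow_mul', coeff_X_pow, h]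
  ring

theorem pell_sq_genfun :
    (1 + X) * (1 - 6 * X + X ^ 2) * PowerSeries.mk (fun n => pell n ^ 2)
      = X * (1 - X) := by
  have key := mul_mk_of_recurrence_three (fun n => pell n ^ 2) (-1) 5 5
    fun n => by rw [pell_sq_add_three]; ring
  calc _ = (1 - C (5 : ℚ) * X - C 5 * X ^ 2 - C (-1) * X ^ 3) * mk (fun n => pell n ^ 2) := by
        simp only [map_ofNat, map_neg, map_one]
        ring
    _ = X * (1 - X) := by
        rw [key]
        norm_num [pell, ← map_pow, ← map_sub]
        ring
end

section
/- The formal power series G(x) = ∑_{n≥0} P_n^3 x^n over ℚ satisfies (1+2x−x^2)(1−14x−x^2) · G(x) = x(1−4x−x^2). -/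
open PowerSeries

/-!
The cubes of a sequence satisfying a second-order linear recurrence satisfy a fourth-order one,
whose characteristic polynomial has as roots the cubes and the products of pairs of roots of the
original: for Pell numbers these are `α³, β³` (roots of `t² - 14t - 1`) and `α²β = -α, αβ² = -β`
(roots of `t² + 2t - 1`). Multiplying the generating function of `P_n³` by the reversed
characteristic polynomial therefore kills every coefficient from degree four on, and the remaining
four are read off from `P_0, …, P_3 = 0, 1, 2, 5`.
-/

theorem PowerSeries.mul_mk_eq_of_recurrence_four {R : Type*} [CommRing R] (a : ℕ → R)
    (c₁ c₂ c₃ c₄ : R)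
    (h : ∀ n, a (n + 4) = c₁ * a (n + 3) + c₂ * a (n + 2) + c₃ * a (n + 1) + c₄ * a n) :
    (1 - C c₁ * X - C c₂ * X ^ 2 - C c₃ * X ^ 3 - C c₄ * X ^ 4) * mk a =
      C (a 0) + C (a 1 - c₁ * a 0) * X + C (a 2 - c₁ * a 1 - c₂ * a 0) * X ^ 2
        + C (a 3 - c₁ * a 2 - c₂ * a 1 - c₃ * a 0) * X ^ 3 := by
  ext n
  rcases n with _ | _ | _ | _ | n
  all_goals simp [sub_mul, mul_assoc, coeff_X_pow_mul', coeff_X_pow, h]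
  all_goals ring

theorem pell_cube_add_four (n : ℕ) :
    pell (n + 4) ^ 3 =
      12 * pell (n + 3) ^ 3 + 30 * pell (n + 2) ^ 3 + (-12) * pell (n + 1) ^ 3
        + (-1) * pell n ^ 3 := by
  simp only [pell]
  ring

theorem pell_cube_genfun :
    (1 + 2 * X - X ^ 2) * (1 - 14 * X - X ^ 2) * PowerSeries.mk (fun n => pell n ^ 3)
      = X * (1 - 4 * X - X ^ 2) := by
  calc (1 + 2 * X - X ^ 2) * (1 - 14 * X - X ^ 2) * PowerSeries.mk (fun n => pell n ^ 3)
      = (1 - C 12 * X - C 30 * X ^ 2 - C (-12) * X ^ 3 - C (-1) * X ^ 4) *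
          PowerSeries.mk (fun n => pell n ^ 3) := by
        simp only [map_neg, map_ofNat, map_one]
        ring
    _ = X * (1 - 4 * X - X ^ 2) := by
        rw [mul_mk_eq_of_recurrence_four (fun n => pell n ^ 3) _ _ _ _ pell_cube_add_four]
        norm_num [pell, map_ofNat]
        ring
end

section
/- The series ∑_{n≥0} F_n^3 / 100^n converges and equals 979900/96940301. -/
/-!
The cubes `F_n ^ 3` satisfy the linear recurrence with characteristic polynomial
`(X ^ 2 - 4 X - 1) (X ^ 2 + X - 1) = X ^ 4 - 3 X ^ 3 - 6 X ^ 2 + 3 X + 1`, whose roots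
`φ ^ 3, φ ^ 2 ψ = -φ, φ ψ ^ 2 = -ψ, ψ ^ 3` are the cubic monomials in the Fibonacci roots. Shifting the series
`S = ∑ F_n ^ 3 x ^ n` against this recurrence gives a linear equation for `S` whose coefficients
are polynomials in `x`; since `F_n ≤ 2 ^ n` the series converges at `x = 1 / 100`, and solving
the equation there yields the value.
-/

open Finset

namespace LinearRecurrence

theorem IsSolution.sub_sum_range_eq_of_hasSum {R : Type*} [CommRing R] [TopologicalSpace R]
    [IsTopologicalRing R] [T2Space R] {E : LinearRecurrence R} {u : ℕ → R} (hu : E.IsSolution u)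
    {x S : R} (hS : HasSum (fun n => u n * x ^ n) S) :
    S - ∑ k ∈ range E.order, u k * x ^ k =
      ∑ i : Fin E.order, E.coeffs i * x ^ (E.order - i) * (S - ∑ k ∈ range i, u k * x ^ k) := by
  have shift (j : ℕ) :
      HasSum (fun n => u (n + j) * x ^ (n + j)) (S - ∑ k ∈ range j, u k * x ^ k) :=
    (hasSum_nat_add_iff' j).2 hS
  have shifted_sum := hasSum_sum (s := (univ : Finset (Fin E.order))) fun i _ =>
    (shift i).mul_left (E.coeffs i * x ^ (E.order - i))
  refine (shift E.order).unique (shifted_sum.congr_fun fun n => ?_)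
  rw [hu n, sum_mul]
  refine sum_congr rfl fun i _ => ?_
  rw [show n + E.order = (E.order - i) + (n + i) by omega, pow_add]
  ring

end LinearRecurrence

def fibCubeRec (R : Type*) [CommRing R] : LinearRecurrence R := ⟨4, ![-1, -3, 6, 3]⟩

theorem fib_cube_isSol_fibCubeRec (R : Type*) [CommRing R] :
    (fibCubeRec R).IsSolution fun n => (Nat.fib n : R) ^ 3 := by
  intro n
  change (Nat.fib (n + 4) : R) ^ 3 = ∑ i : Fin 4, ![-1, -3, 6, 3] i * (Nat.fib (n + i) : R) ^ 3
  simp [Fin.sum_univ_four, Nat.fib_add_two]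
  ring

theorem Nat.fib_le_two_pow (n : ℕ) : Nat.fib n ≤ 2 ^ n := by
  induction n using Nat.twoStepInduction with
  | zero => simp
  | one => simp
  | more n h0 h1 => rw [Nat.fib_add_two, pow_add, pow_succ]; omega

theorem summable_fib_cube_mul_pow {x : ℝ} (hx : |x| < 1 / 8) :
    Summable fun n : ℕ => (Nat.fib n : ℝ) ^ 3 * x ^ n := by
  refine Summable.of_norm_bounded (summable_geometric_of_lt_one (by positivity) (by linarith :
    8 * |x| < 1)) fun n => ?_
  have hfib : (Nat.fib n : ℝ) ≤ 2 ^ n := by exact_mod_cast Nat.fib_le_two_pow n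
  calc ‖(Nat.fib n : ℝ) ^ 3 * x ^ n‖ = (Nat.fib n : ℝ) ^ 3 * |x| ^ n := by
        simp only [norm_mul, norm_pow, Real.norm_eq_abs, Nat.abs_cast]
    _ ≤ ((2 : ℝ) ^ n) ^ 3 * |x| ^ n := by gcongr
    _ = (8 * |x|) ^ n := by rw [← pow_mul, mul_comm n 3, pow_mul, mul_pow]; norm_num

theorem fib_cube_tsum :
    HasSum (fun n : ℕ => (Nat.fib n : ℝ) ^ 3 * (1 / 100) ^ n) (979900 / 96940301) := by
  obtain ⟨S, hS⟩ := summable_fib_cube_mul_pow (x := 1 / 100) (by norm_num [abs_of_pos])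
  have hS_rec : S - ∑ k ∈ range 4, (Nat.fib k : ℝ) ^ 3 * (1 / 100) ^ k =
      ∑ i : Fin 4, ![-1, -3, 6, 3] i * (1 / 100) ^ (4 - (i : ℕ)) *
        (S - ∑ k ∈ range (i : ℕ), (Nat.fib k : ℝ) ^ 3 * (1 / 100) ^ k) :=
    (fib_cube_isSol_fibCubeRec ℝ).sub_sum_range_eq_of_hasSum hS
  have hS_eq : S = 979900 / 96940301 := by
    simp [Fin.sum_univ_four, sum_range_succ, Nat.fib_add_two] at hS_rec
    linarith
  rwa [hS_eq] at hS
end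

section
/- Let U_n(t) denote the Chebyshev polynomials of the second kind. Then the formal power series identity (1−x)((1+x)^2 − 4t^2 x) · ∑_{n≥0} U_n(t)^2 x^n = 1 + x holds in (ℚ[t])[[x]]. -/
/-! If `u (n + 2) = s * u (n + 1) - u n`, the squares `u n ^ 2` satisfy the order-three recurrence
with characteristic polynomial `(x - 1) (x ^ 2 - (s ^ 2 - 2) x + 1)`. For `s = 2t` its reversal is
`(1 - x) ((1 + x) ^ 2 - 4 t ^ 2 x)`, so multiplying the generating function of `U_n(t) ^ 2` by it
leaves a polynomial of degree at most two, which the initial values `1, 4t², (4t² - 1)²` make `1 + x`. -/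

open PowerSeries Polynomial

theorem PowerSeries.mul_mk_of_order_three_recurrence {R : Type*} [CommRing R] (a b d : R)
    (c : ℕ → R) (h : ∀ n, c (n + 3) = a * c (n + 2) + b * c (n + 1) + d * c n) :
    (1 - C a * X - C b * X ^ 2 - C d * X ^ 3) * mk c
      = C (c 0) + C (c 1 - a * c 0) * X + C (c 2 - a * c 1 - b * c 0) * X ^ 2 := by
  ext n
  rcases n with _ | _ | _ | n
  all_goals simp [sub_mul, mul_assoc, coeff_X_pow_mul', coeff_X_pow]
  linear_combination h n

theorem sq_add_three_of_add_two_eq {R : Type*} [CommRing R] (s : R) (u : ℕ → R)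
    (h : ∀ n, u (n + 2) = s * u (n + 1) - u n) (n : ℕ) :
    u (n + 3) ^ 2 = (s ^ 2 - 1) * u (n + 2) ^ 2 + -(s ^ 2 - 1) * u (n + 1) ^ 2 + 1 * u n ^ 2 := by
  rw [h (n + 1), h n]
  ring

namespace Polynomial.Chebyshev

theorem U_sq_genfun (R : Type*) [CommRing R] :
    ((1 - PowerSeries.X) *
        ((1 + PowerSeries.X) ^ 2 - 4 * PowerSeries.C (R := R[X]) (Polynomial.X ^ 2) * PowerSeries.X)) *
        PowerSeries.mk (fun n : ℕ => U R n ^ 2)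
      = 1 + PowerSeries.X := by
  have hU (n : ℕ) : U R (n + 2 : ℕ) = 2 * Polynomial.X * U R (n + 1 : ℕ) - U R n := by
    push_cast
    exact U_add_two R n
  have hden : (1 - PowerSeries.X) *
      ((1 + PowerSeries.X) ^ 2 - 4 * PowerSeries.C (R := R[X]) (Polynomial.X ^ 2) * PowerSeries.X)
      = 1 - PowerSeries.C ((2 * Polynomial.X) ^ 2 - 1) * PowerSeries.X
        - PowerSeries.C (-((2 * Polynomial.X) ^ 2 - 1)) * PowerSeries.X ^ 2
        - PowerSeries.C 1 * PowerSeries.X ^ 3 := by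
    simp only [map_sub, map_neg, map_one, map_mul, map_pow, map_ofNat]
    ring
  have hcoeff₁ : U R (1 : ℕ) ^ 2 - ((2 * Polynomial.X) ^ 2 - 1) * U R (0 : ℕ) ^ 2 = 1 := by
    simp only [Nat.cast_one, Nat.cast_zero, U_one, U_zero]
    ring
  have hcoeff₂ : U R (2 : ℕ) ^ 2 - ((2 * Polynomial.X) ^ 2 - 1) * U R (1 : ℕ) ^ 2
      - -((2 * Polynomial.X) ^ 2 - 1) * U R (0 : ℕ) ^ 2 = 0 := by
    simp only [Nat.cast_ofNat, Nat.cast_one, Nat.cast_zero, U_two, U_one, U_zero]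
    ring
  rw [hden, mul_mk_of_order_three_recurrence _ _ _ _
    (sq_add_three_of_add_two_eq _ (fun n : ℕ => U R n) hU), hcoeff₁, hcoeff₂]
  simp

end Polynomial.Chebyshev

theorem chebyshevU_sq_genfun :
    ((1 - PowerSeries.X) *
        ((1 + PowerSeries.X) ^ 2 - 4 * PowerSeries.C (R := ℚ[X]) (Polynomial.X ^ 2) * PowerSeries.X)) *
        PowerSeries.mk (fun n : ℕ => (Polynomial.Chebyshev.U ℚ n) ^ 2)
      = 1 + PowerSeries.X :=
  Polynomial.Chebyshev.U_sq_genfun ℚ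
end

section
/- Let (w_n) satisfy w_{n+2} = p·w_{n+1} + q·w_n over ℚ with w_0 = a, w_1 = b, and for 1 ≤ d ≤ k−1 define A_{k,d}(x) = ∑_{n≥0} w_n^{k−d} w_{n+1}^d x^{n+1} as a formal power series. Then A_{k,d}(x) − a^{k−d} b^d x = p^d x (H_k(x) − a^k) + x ∑_{j=1}^d C(d,j) p^{d−j} q^j A_{k,k−j}(x), where H_k(x) = ∑_{n≥0} w_n^k x^n. -/
open PowerSeries

/-! Coefficient `n + 1` of `A_{k,d} / x` is `w_{n+1}^{k-d} w_{n+2}^d`. Substituting the recurrence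
for `w_{n+2}` and expanding `(p w_{n+1} + q w_n)^d` binomially, the `j = 0` term is
`p^d w_{n+1}^k`, a coefficient of `(H_k - a^k) / x`, and the `j`-th term is a multiple of
`w_n^j w_{n+1}^{k-j}`, a coefficient of `A_{k,k-j} / x`. -/

theorem PowerSeries.mk_eq_C_add_X_mul_mk_succ {R : Type*} [Semiring R] (f : ℕ → R) :
    mk f = C (f 0) + X * mk (fun n => f (n + 1)) := by
  simpa [add_comm] using eq_X_mul_shift_add_const (mk f)

theorem PowerSeries.mk_mul_add_sum_mul {R ι : Type*} [CommSemiring R] (s : Finset ι) (α : R)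
    (c : ι → R) (f : ℕ → R) (g : ι → ℕ → R) :
    mk (fun n => α * f n + ∑ i ∈ s, c i * g i n) = C α * mk f + ∑ i ∈ s, C (c i) * mk (g i) := by
  ext n
  simp [map_sum]

theorem pow_sub_mul_add_pow_eq_sum_Icc {R : Type*} [CommSemiring R] (p q u v : R) {k d : ℕ}
    (hdk : d ≤ k) :
    v ^ (k - d) * (p * v + q * u) ^ d
      = p ^ d * v ^ k + ∑ j ∈ Finset.Icc 1 d,
          (d.choose j : R) * p ^ (d - j) * q ^ j * (u ^ j * v ^ (k - j)) := by
  rw [add_comm (p * v), add_pow, Finset.mul_sum, Finset.range_eq_Ico,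
    Finset.sum_eq_sum_Ico_succ_bot d.add_one_pos, zero_add, Finset.Ico_add_one_right_eq_Icc]
  congr 1
  · rw [← Nat.sub_add_cancel hdk]
    simp only [Nat.add_sub_cancel, pow_zero, one_mul, Nat.sub_zero, Nat.choose_zero_right]
    push_cast; ring
  · refine Finset.sum_congr rfl fun j hj => ?_
    have hv : v ^ (k - d) * v ^ (d - j) = v ^ (k - j) := by
      rw [← pow_add]; congr 1; have := (Finset.mem_Icc.mp hj).2; omega
    rw [← hv]; ring

theorem horadam_A_relation_general (p q a b : ℚ) (w : ℕ → ℚ)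
    (h0 : w 0 = a) (h1 : w 1 = b)
    (hrec : ∀ n, w (n + 2) = p * w (n + 1) + q * w n)
    (k d : ℕ) (hdk : d ≤ k - 1)
    (A : ℕ → PowerSeries ℚ)
    (hA : ∀ e, A e = X * PowerSeries.mk (fun n => w n ^ (k - e) * w (n + 1) ^ e))
    (H : PowerSeries ℚ) (hH : H = PowerSeries.mk (fun n => w n ^ k)) :
    A d - C (R := ℚ) (a ^ (k - d) * b ^ d) * X
      = C (R := ℚ) (p ^ d) * X * (H - C (R := ℚ) (a ^ k))
        + X * ∑ j ∈ Finset.Icc 1 d,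
            C (R := ℚ) ((d.choose j : ℚ) * p ^ (d - j) * q ^ j) * A (k - j) := by
  have hd : d ≤ k := by omega
  have hstep (n : ℕ) : w (n + 1) ^ (k - d) * w (n + 1 + 1) ^ d
      = p ^ d * w (n + 1) ^ k + ∑ j ∈ Finset.Icc 1 d, (d.choose j : ℚ) * p ^ (d - j) * q ^ j
          * (w n ^ (k - (k - j)) * w (n + 1) ^ (k - j)) := by
    rw [hrec, pow_sub_mul_add_pow_eq_sum_Icc _ _ _ _ hd]
    refine congrArg _ (Finset.sum_congr rfl fun j hj => ?_)
    rw [Nat.sub_sub_self ((Finset.mem_Icc.mp hj).2.trans hd)]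
  rw [hA, mk_eq_C_add_X_mul_mk_succ, h0, h1]
  simp only [hstep, mk_mul_add_sum_mul, hH, mk_eq_C_add_X_mul_mk_succ (fun n => w n ^ k), h0, hA]
  simp_rw [mul_left_comm _ X, ← Finset.mul_sum]
  ring

theorem horadam_A_relation (p q a b : ℚ) (w : ℕ → ℚ)
    (h0 : w 0 = a) (h1 : w 1 = b)
    (hrec : ∀ n, w (n + 2) = p * w (n + 1) + q * w n)
    (k d : ℕ) (hd1 : 1 ≤ d) (hdk : d ≤ k - 1)
    (A : ℕ → PowerSeries ℚ)
    (hA : ∀ e, A e = X * PowerSeries.mk (fun n => w n ^ (k - e) * w (n + 1) ^ e))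
    (H : PowerSeries ℚ) (hH : H = PowerSeries.mk (fun n => w n ^ k)) :
    A d - C (R := ℚ) (a ^ (k - d) * b ^ d) * X
      = C (R := ℚ) (p ^ d) * X * (H - C (R := ℚ) (a ^ k))
        + X * ∑ j ∈ Finset.Icc 1 d,
            C (R := ℚ) ((d.choose j : ℚ) * p ^ (d - j) * q ^ j) * A (k - j) :=
  horadam_A_relation_general p q a b w h0 h1 hrec k d hdk A hA H hH
end
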